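/- arXiv:1712.05735 — 2 statements merged into one kernel-verified Lean document; each statement's English description precedes it below -/
import Mathlib

section
/- For every Boolean function f:{0,1}^n→{0,1}, the decrease of f is at most 2^{DT(f)} − 1. -/
open Finset

/-- The maximal chain in the Boolean hypercube corresponding to a permutation `σ`:
its `k`-th element is the point whose `i`-th coordinate is `1` iff `σ i < k`. -/
def chainOf {n : ℕ} (σ : Equiv.Perm (Fin n)) (k : Fin (n + 1)) : Fin n → Bool :=
  fun i => decide ((σ i : ℕ) < (k : ℕ))

/-- The number of alternations of `f` along the chain of `σ`. -/
def altOn {n : ℕ} (f : (Fin n → Bool) → Bool) (σ : Equiv.Perm (Fin n)) : ℕ :=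
  (Finset.univ.filter fun k : Fin n =>
    f (chainOf σ k.castSucc) ≠ f (chainOf σ k.succ)).card

/-- The alternation of a Boolean function: the maximum number of value changes
along any maximal chain from `0^n` to `1^n`. -/
def alt {n : ℕ} (f : (Fin n → Bool) → Bool) : ℕ :=
  Finset.univ.sup (altOn f)

/-- The number of decreases (`1 → 0` changes) of `f` along the chain of `σ`. -/
def dcOn {n : ℕ} (f : (Fin n → Bool) → Bool) (σ : Equiv.Perm (Fin n)) : ℕ :=
  (Finset.univ.filter fun k : Fin n =>
    f (chainOf σ k.castSucc) = true ∧ f (chainOf σ k.succ) = false).card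

/-- The decrease of a Boolean function: the maximum number of `1 → 0` changes
along any maximal chain from `0^n` to `1^n`. -/
def dc {n : ℕ} (f : (Fin n → Bool) → Bool) : ℕ :=
  Finset.univ.sup (dcOn f)

/-- Deterministic decision trees on `n` Boolean variables. -/
inductive DTree (n : ℕ) : Type where
  | leaf : Bool → DTree n
  | node : Fin n → DTree n → DTree n → DTree n

namespace DTree

/-- Evaluation of a decision tree on an input. -/
def eval {n : ℕ} : DTree n → (Fin n → Bool) → Bool
  | leaf b, _ => b
  | node i t0 t1, x => if x i then eval t1 x else eval t0 x

/-- Depth of a decision tree. -/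
def depth {n : ℕ} : DTree n → ℕ
  | leaf _ => 0
  | node _ t0 t1 => max (depth t0) (depth t1) + 1

end DTree

/-- Minimum depth of a deterministic decision tree computing `f`. -/
noncomputable def DT {n : ℕ} (f : (Fin n → Bool) → Bool) : ℕ :=
  sInf {d | ∃ t : DTree n, (∀ x, t.eval x = f x) ∧ t.depth = d}

/-- Flip the `i`-th bit of `x`. -/
def flipBit {n : ℕ} (x : Fin n → Bool) (i : Fin n) : Fin n → Bool :=
  Function.update x i (!x i)

/-- Sensitivity of `f` at `x`. -/
def sensAt {n : ℕ} (f : (Fin n → Bool) → Bool) (x : Fin n → Bool) : ℕ :=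
  (Finset.univ.filter fun i => f (flipBit x i) ≠ f x).card

/-- Sensitivity of `f`. -/
def sens {n : ℕ} (f : (Fin n → Bool) → Bool) : ℕ :=
  Finset.univ.sup fun x : Fin n → Bool => sensAt f x

/-- Total influence of `f`: the average sensitivity over a uniformly random input. -/
noncomputable def influence {n : ℕ} (f : (Fin n → Bool) → Bool) : ℝ :=
  (∑ x : Fin n → Bool, (sensAt f x : ℝ)) / 2 ^ n

/-- Fourier coefficient of a real-valued function on the Boolean cube. -/
noncomputable def bFourier {n : ℕ} (g : (Fin n → Bool) → ℝ) (S : Finset (Fin n)) : ℝ :=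
  (∑ x : Fin n → Bool, g x * (-1 : ℝ) ^ (S.filter fun i => x i = true).card) / 2 ^ n

/-- The `±1`-valued version `1 - 2f` of a `{0,1}`-valued Boolean function. -/
def toPM {n : ℕ} (f : (Fin n → Bool) → Bool) : (Fin n → Bool) → ℝ :=
  fun x => 1 - 2 * (if f x then (1 : ℝ) else 0)

/-- Sparsity of a real-valued function on the Boolean cube: the number of nonzero
Fourier coefficients. -/
noncomputable def sparsityR {n : ℕ} (g : (Fin n → Bool) → ℝ) : ℕ :=
  letI := Classical.decPred fun S : Finset (Fin n) => bFourier g S ≠ 0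
  (Finset.univ.filter fun S : Finset (Fin n) => bFourier g S ≠ 0).card

/-- Sparsity of a `{0,1}`-valued Boolean function, i.e. the sparsity of `1 - 2f`. -/
noncomputable def sparsity {n : ℕ} (f : (Fin n → Bool) → Bool) : ℕ :=
  sparsityR (toPM f)

/-- Evaluation of a multilinear polynomial, given by its coefficients indexed by
monomials (subsets of variables), on a Boolean input. -/
def mlEval {n : ℕ} {R : Type*} [CommRing R] (c : Finset (Fin n) → R) (x : Fin n → Bool) : R :=
  ∑ S : Finset (Fin n), c S * ∏ i ∈ S, (if x i then (1 : R) else 0)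

/-- `c` is the (unique) multilinear polynomial over `R` agreeing with `f` on the cube. -/
def Represents {n : ℕ} {R : Type*} [CommRing R] (c : Finset (Fin n) → R)
    (f : (Fin n → Bool) → Bool) : Prop :=
  ∀ x, mlEval c x = if f x then 1 else 0

/-- The degree of the multilinear polynomial over `R` agreeing with `f`. -/
noncomputable def degRing {n : ℕ} (R : Type*) [CommRing R] (f : (Fin n → Bool) → Bool) : ℕ :=
  sInf {d | ∃ c : Finset (Fin n) → R, Represents c f ∧ ∀ S, c S ≠ 0 → S.card ≤ d}

/-- Real degree `deg f`. -/
noncomputable def degR {n : ℕ} (f : (Fin n → Bool) → Bool) : ℕ := degRing ℝ f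

/-- Degree over `ℤ_m`; `degMod 2 f` is the `𝔽₂`-degree. -/
noncomputable def degMod {n : ℕ} (m : ℕ) (f : (Fin n → Bool) → Bool) : ℕ := degRing (ZMod m) f

/-- Block composition `f ∘ g` of Boolean functions. -/
def comp {m n : ℕ} (f : (Fin m → Bool) → Bool) (g : (Fin n → Bool) → Bool) :
    (Fin (m * n) → Bool) → Bool :=
  fun x => f fun i => g fun j => x (finProdFinEquiv (i, j))

/-- `iterComp h k` is the `(k+1)`-fold composition `h^{∘(k+1)}`. -/
def iterComp {n : ℕ} (h : (Fin n → Bool) → Bool) : (k : ℕ) → (Fin (n ^ (k + 1)) → Bool) → Bool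
  | 0 => fun x => h fun i => x (Fin.cast (pow_one n).symm i)
  | k + 1 => fun x =>
      comp (iterComp h (k)) h fun i => x (Fin.cast (pow_succ n (k + 1)).symm i)

/-- The address function `ADDR₂` on `6` bits: `ADDR₂(x₁,x₂,y₀,y₁,y₂,y₃) = y_{2x₁+x₂}`. -/
def ADDR2 (x : Fin 6 → Bool) : Bool :=
  if x 0 then (if x 1 then x 5 else x 4) else (if x 1 then x 3 else x 2)

/-- The family `F = {f_k}`: `f₁(x) = x`, and
`f_{k+1}(z, u, v) = f_k(u)` if `z = 0` and `f_k(v)` if `z = 1`,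
where `u, v` are disjoint blocks of `2^k - 1` variables.
(`famF 0` is a dummy constant function; the family starts at `k = 1`.) -/
def famF : (k : ℕ) → (Fin (2 ^ k - 1) → Bool) → Bool
  | 0 => fun _ => false
  | 1 => fun x => x ⟨0, by norm_num⟩
  | k + 2 => fun x =>
      if x ⟨0, by
          have h : 1 < 2 ^ (k + 2) := Nat.one_lt_two_pow_iff.mpr (by omega)
          omega⟩ then
        famF (k + 1) (fun j => x ⟨1 + (2 ^ (k + 1) - 1) + (j : ℕ), by
          have hj := j.isLt
          have h : 2 ^ (k + 2) = 2 * 2 ^ (k + 1) := by ring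
          have h1 : 0 < 2 ^ (k + 1) := Nat.two_pow_pos _
          omega⟩)
      else
        famF (k + 1) (fun j => x ⟨1 + (j : ℕ), by
          have hj := j.isLt
          have h : 2 ^ (k + 2) = 2 * 2 ^ (k + 1) := by ring
          have h1 : 0 < 2 ^ (k + 1) := Nat.two_pow_pos _
          omega⟩)

/-!
A decision tree of depth `d` querying `xᵢ` at its root computes `if xᵢ then f₁ else f₀`
with `f₀, f₁` of depth `d - 1`. Along a chain, `xᵢ` switches from `0` to `1` exactly once, so
the chain sees the decreases of `f₀` before that step, those of `f₁` after it, and at most one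
more at it.
Hence the decrease satisfies `D(d) ≤ 2 D(d - 1) + 1` with `D(0) = 0`, i.e. `D(d) ≤ 2 ^ d - 1`.
-/

namespace DTree

theorem exists_eval_eq_of_depends_on {n : ℕ} (l : List (Fin n)) (f : (Fin n → Bool) → Bool)
    (hf : ∀ x y, (∀ i ∈ l, x i = y i) → f x = f y) : ∃ t : DTree n, t.eval = f := by
  induction l generalizing f with
  | nil => exact ⟨leaf (f fun _ => false), funext fun x => hf _ _ (by simp)⟩
  | cons i l ih =>
    have restrict (b : Bool) : ∃ t : DTree n, t.eval = fun x => f (Function.update x i b) :=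
      ih _ fun x y hxy => hf _ _ fun j hj => by
        rcases eq_or_ne j i with rfl | hji
        · simp
        · simpa [hji] using hxy j ((List.mem_cons.mp hj).resolve_left hji)
    obtain ⟨t₀, ht₀⟩ := restrict false
    obtain ⟨t₁, ht₁⟩ := restrict true
    refine ⟨node i t₀ t₁, funext fun x => ?_⟩
    cases hx : x i <;> simp [eval, ht₀, ht₁, ← hx]

theorem exists_eval_eq {n : ℕ} (f : (Fin n → Bool) → Bool) : ∃ t : DTree n, t.eval = f :=
  exists_eval_eq_of_depends_on (List.finRange n) f fun _ _ hxy =>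
    congrArg f (funext fun i => hxy i (List.mem_finRange i))

end DTree

theorem exists_eval_eq_depth_DT {n : ℕ} (f : (Fin n → Bool) → Bool) :
    ∃ t : DTree n, t.eval = f ∧ t.depth = DT f := by
  obtain ⟨t, ht⟩ := DTree.exists_eval_eq f
  have hDT : DT f ∈ {d | ∃ t : DTree n, (∀ x, t.eval x = f x) ∧ t.depth = d} :=
    Nat.sInf_mem ⟨_, t, fun x => congrFun ht x, rfl⟩
  obtain ⟨t, ht, hd⟩ := hDT
  exact ⟨t, funext ht, hd⟩

theorem dcOn_ite_le {n : ℕ} (i : Fin n) (f₀ f₁ : (Fin n → Bool) → Bool)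
    (σ : Equiv.Perm (Fin n)) :
    dcOn (fun x => if x i then f₁ x else f₀ x) σ ≤ dcOn f₀ σ + dcOn f₁ σ + 1 := by
  unfold dcOn
  refine (card_le_card fun k hk => ?_).trans
    ((card_union_le _ {σ i}).trans (Nat.add_le_add_right (card_union_le _ _) _))
  simp only [mem_filter, mem_univ, true_and] at hk
  simp only [mem_union, mem_filter, mem_univ, true_and, mem_singleton]
  rcases lt_trichotomy k (σ i) with hlt | rfl | hgt
  · have hoff : chainOf σ k.castSucc i = false ∧ chainOf σ k.succ i = false := by
      simp [chainOf]; omega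
    simp only [hoff] at hk
    exact .inl (.inl hk)
  · exact .inr rfl
  · have hon : chainOf σ k.castSucc i = true ∧ chainOf σ k.succ i = true := by
      simp [chainOf]; omega
    simp only [hon] at hk
    exact .inl (.inr hk)

theorem DTree.dcOn_eval_add_one_le {n : ℕ} (t : DTree n) (σ : Equiv.Perm (Fin n)) :
    dcOn t.eval σ + 1 ≤ 2 ^ t.depth := by
  induction t with
  | leaf b => cases b <;> simp [dcOn, eval, depth]
  | node i t₀ t₁ ih₀ ih₁ =>
    have hd₀ : 2 ^ t₀.depth ≤ 2 ^ max t₀.depth t₁.depth :=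
      Nat.pow_le_pow_right two_pos (le_max_left ..)
    have hd₁ : 2 ^ t₁.depth ≤ 2 ^ max t₀.depth t₁.depth :=
      Nat.pow_le_pow_right two_pos (le_max_right ..)
    have hsplit := dcOn_ite_le i t₀.eval t₁.eval σ
    simp only [eval, depth, pow_succ] at hsplit ⊢
    omega

/-- For every Boolean function `f : {0,1}ⁿ → {0,1}`,
`dc f ≤ 2 ^ DT f - 1`. -/
theorem dc_le_two_pow_DT_sub_one {n : ℕ} (f : (Fin n → Bool) → Bool) :
    dc f ≤ 2 ^ DT f - 1 := by
  obtain ⟨t, rfl, hdepth⟩ := exists_eval_eq_depth_DT f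
  rw [← hdepth]
  exact Finset.sup_le fun σ _ => Nat.le_sub_one_of_lt (t.dcOn_eval_add_one_le σ)
end

section
/- For any Boolean function h:{0,1}^n→{0,1} with h(0^n) ≠ h(1^n) and any k ≥ 2, the k-fold composition satisfies alt(h^{∘k}) ≥ alt(h)^k. -/
open Finset

/-!
Along a chain for `f ∘ g`, flip the blocks one at a time, each block along its own chain
for `g`, and order the blocks along a chain for `f`. While block `i` is traversed, `f ∘ g`
changes value exactly when `g` of that block does and `f` changes when its `i`-th input is
flipped, so choosing optimal chains for `f` and `g` yields `alt f * alt g` alternations.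
This needs the block value of `g` to run from `g 0ⁿ` to `g 1ⁿ ≠ g 0ⁿ`; if `g` is decreasing
there, replace `f ∘ g` by `(f ∘ ¬) ∘ (¬ ∘ g)`, and reversing chains shows that negating the
inputs or the output does not change the alternation. Iterating gives `alt h ^ k ≤ alt h^{∘k}`.
-/

lemma Bool.apply_ne_apply_iff {α : Type*} (φ : Bool → α) (a a' : Bool) :
    φ a ≠ φ a' ↔ φ false ≠ φ true ∧ a ≠ a' := by
  cases a <;> cases a' <;> simp [ne_comm]

section Negation

variable {n : ℕ}

lemma not_chainOf_trans_revPerm (σ : Equiv.Perm (Fin n)) (k : Fin (n + 1)) :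
    (fun i => !chainOf (σ.trans Fin.revPerm) k i) = chainOf σ k.rev := by
  funext i
  have := (σ i).isLt
  simp only [chainOf, Equiv.trans_apply, Fin.revPerm_apply, Fin.val_rev, ← decide_not]
  exact decide_eq_decide.mpr (by omega)

lemma altOn_comp_not (f : (Fin n → Bool) → Bool) (σ : Equiv.Perm (Fin n)) :
    altOn (fun x => f fun i => !x i) (σ.trans Fin.revPerm) = altOn f σ := by
  refine Finset.card_equiv Fin.revPerm fun k => ?_
  simp only [mem_filter, mem_univ, true_and, not_chainOf_trans_revPerm, Fin.rev_castSucc,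
    Fin.rev_succ, Fin.revPerm_apply]
  exact ne_comm

lemma alt_le_alt_comp_not (f : (Fin n → Bool) → Bool) :
    alt f ≤ alt fun x => f fun i => !x i := by
  obtain ⟨σ, -, hσ⟩ := exists_mem_eq_sup univ univ_nonempty (altOn f)
  rw [alt, hσ, ← altOn_comp_not]
  exact le_sup (mem_univ _)

lemma altOn_not_comp (g : (Fin n → Bool) → Bool) (σ : Equiv.Perm (Fin n)) :
    altOn (fun x => !g x) σ = altOn g σ := by
  simp only [altOn, ne_eq, Bool.not_inj_iff]

lemma alt_not_comp (g : (Fin n → Bool) → Bool) : alt (fun x => !g x) = alt g := by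
  rw [alt, alt, funext (altOn_not_comp g)]

end Negation

section Composition

variable {m n : ℕ}

/-- The chain for `f ∘ g` that flips the blocks one after another in the order of `τ`,
each along `σ`. -/
def prodPerm (τ : Equiv.Perm (Fin m)) (σ : Equiv.Perm (Fin n)) : Equiv.Perm (Fin (m * n)) :=
  finProdFinEquiv.permCongr (τ.prodCongr σ)

lemma chainOf_prodPerm_block (τ : Equiv.Perm (Fin m)) (σ : Equiv.Perm (Fin n)) (t : Fin m)
    (K : Fin (n + 1)) (M : Fin (m * n + 1)) (hM : (M : ℕ) = K + n * t) (i : Fin m) :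
    (fun j => chainOf (prodPerm τ σ) M (finProdFinEquiv (i, j))) =
      if (τ i : ℕ) < t then fun _ => true
      else if τ i = t then chainOf σ K else fun _ => false := by
  funext j
  have hj := (σ j).isLt
  have hK := K.isLt
  simp only [chainOf, prodPerm, Equiv.permCongr_apply, Equiv.symm_apply_apply,
    Equiv.prodCongr_apply, Prod.map, finProdFinEquiv_apply_val, hM]
  rcases lt_trichotomy (τ i : ℕ) t with hlt | heq | hgt
  · have : n * (τ i + 1) ≤ n * t := Nat.mul_le_mul_left n hlt
    rw [Nat.mul_succ] at this
    rw [if_pos hlt]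
    exact decide_eq_true (by omega)
  · rw [if_neg heq.not_lt, if_pos (Fin.ext heq), heq]
    exact decide_eq_decide.mpr (by omega)
  · have : n * (t + 1) ≤ n * τ i := Nat.mul_le_mul_left n hgt
    rw [Nat.mul_succ] at this
    rw [if_neg (by omega), if_neg fun h => hgt.ne' (congrArg Fin.val h)]
    exact decide_eq_false (by omega)

variable (f : (Fin m → Bool) → Bool) {g : (Fin n → Bool) → Bool}
  (τ : Equiv.Perm (Fin m)) (σ : Equiv.Perm (Fin n))

lemma comp_chainOf_prodPerm (hg0 : g (fun _ => false) = false)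
    (hg1 : g (fun _ => true) = true) (t : Fin m) (K : Fin (n + 1)) (M : Fin (m * n + 1))
    (hM : (M : ℕ) = K + n * t) :
    comp f g (chainOf (prodPerm τ σ) M) =
      f fun i => if (τ i : ℕ) < t then true else if τ i = t then g (chainOf σ K) else false := by
  simp only [comp, chainOf_prodPerm_block τ σ t K M hM, apply_ite g, hg0, hg1]

lemma comp_chainOf_prodPerm_ne_iff (hg0 : g (fun _ => false) = false)
    (hg1 : g (fun _ => true) = true) (t : Fin m) (s : Fin n) :
    comp f g (chainOf (prodPerm τ σ) (finProdFinEquiv (t, s)).castSucc) ≠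
        comp f g (chainOf (prodPerm τ σ) (finProdFinEquiv (t, s)).succ) ↔
      f (chainOf τ t.castSucc) ≠ f (chainOf τ t.succ) ∧
        g (chainOf σ s.castSucc) ≠ g (chainOf σ s.succ) := by
  rw [comp_chainOf_prodPerm f τ σ hg0 hg1 t s.castSucc _ (by simp [finProdFinEquiv_apply_val]),
    comp_chainOf_prodPerm f τ σ hg0 hg1 t s.succ _ (by simp [finProdFinEquiv_apply_val]; ring),
    Bool.apply_ne_apply_iff
      (fun a => f fun i => if (τ i : ℕ) < t then true else if τ i = t then a else false)]
  have h0 : (fun i => if (τ i : ℕ) < t then true else if τ i = t then false else false) =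
      chainOf τ t.castSucc := by
    funext i
    simp [chainOf]
  have h1 : (fun i => if (τ i : ℕ) < t then true else if τ i = t then true else false) =
      chainOf τ t.succ := by
    funext i
    simp only [chainOf, Fin.val_succ, Fin.ext_iff]
    split_ifs <;> symm <;> simp only [decide_eq_true_eq, decide_eq_false_iff_not] <;> omega
  rw [h0, h1]

lemma altOn_comp_prodPerm (hg0 : g (fun _ => false) = false)
    (hg1 : g (fun _ => true) = true) : altOn (comp f g) (prodPerm τ σ) = altOn f τ * altOn g σ := by
  rw [altOn, altOn, altOn, ← card_product, ← filter_product, univ_product_univ]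
  refine (card_equiv finProdFinEquiv fun ⟨t, s⟩ => ?_).symm
  simp only [mem_filter, mem_univ, true_and]
  exact (comp_chainOf_prodPerm_ne_iff f τ σ hg0 hg1 t s).symm

end Composition

lemma alt_mul_alt_le_alt_comp_of_eq_false_of_eq_true {m n : ℕ} (f : (Fin m → Bool) → Bool)
    {g : (Fin n → Bool) → Bool} (hg0 : g (fun _ => false) = false)
    (hg1 : g (fun _ => true) = true) :
    alt f * alt g ≤ alt (comp f g) := by
  obtain ⟨τ, -, hτ⟩ := exists_mem_eq_sup univ univ_nonempty (altOn f)
  obtain ⟨σ, -, hσ⟩ := exists_mem_eq_sup univ univ_nonempty (altOn g)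
  rw [alt, alt, hτ, hσ, ← altOn_comp_prodPerm f τ σ hg0 hg1]
  exact le_sup (mem_univ _)

lemma alt_mul_alt_le_alt_comp {m n : ℕ} (f : (Fin m → Bool) → Bool)
    {g : (Fin n → Bool) → Bool} (hg : g (fun _ => false) ≠ g (fun _ => true)) :
    alt f * alt g ≤ alt (comp f g) := by
  cases hg0 : g (fun _ => false)
  · rw [hg0] at hg
    exact alt_mul_alt_le_alt_comp_of_eq_false_of_eq_true f hg0 (by simpa using hg.symm)
  · have hcomp : comp f g = comp (fun x => f fun i => !x i) (fun x => !g x) := by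
      funext x
      simp only [comp, Bool.not_not]
    calc alt f * alt g ≤ alt (fun x => f fun i => !x i) * alt (fun x => !g x) := by
          rw [alt_not_comp]
          exact Nat.mul_le_mul_right _ (alt_le_alt_comp_not f)
      _ ≤ alt (comp f g) := by
          rw [hcomp]
          exact alt_mul_alt_le_alt_comp_of_eq_false_of_eq_true _ (by simp [hg0])
            (by simpa [hg0] using hg)

lemma alt_comp_finCast {N M : ℕ} (e : N = M) (f : (Fin N → Bool) → Bool) :
    alt (fun x : Fin M → Bool => f fun i => x (Fin.cast e i)) = alt f := by
  subst e
  rfl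

lemma alt_pow_succ_le_alt_iterComp {n : ℕ} {h : (Fin n → Bool) → Bool}
    (hne : h (fun _ => false) ≠ h (fun _ => true)) (k : ℕ) :
    alt h ^ (k + 1) ≤ alt (iterComp h k) := by
  induction k with
  | zero => exact (pow_one (alt h)).trans_le (alt_comp_finCast _ h).ge
  | succ k ih =>
    calc alt h ^ (k + 2) = alt h ^ (k + 1) * alt h := pow_succ _ _
      _ ≤ alt (iterComp h k) * alt h := Nat.mul_le_mul_right _ ih
      _ ≤ alt (comp (iterComp h k) h) := alt_mul_alt_le_alt_comp _ hne
      _ = alt (iterComp h (k + 1)) := (alt_comp_finCast _ _).symm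

/-- For any Boolean function `h : {0,1}ⁿ → {0,1}` with `h 0ⁿ ≠ h 1ⁿ`
and any `k ≥ 2`, the `k`-fold composition satisfies `alt (h^{∘k}) ≥ (alt h) ^ k`.
(Recall `iterComp h (k - 1)` is the `k`-fold composition `h^{∘k}`.) -/
theorem alt_iterComp_ge {n : ℕ} (h : (Fin n → Bool) → Bool)
    (hne : h (fun _ => false) ≠ h (fun _ => true)) (k : ℕ) (hk : 2 ≤ k) :
    alt h ^ k ≤ alt (iterComp h (k - 1)) := by
  obtain ⟨j, rfl⟩ : ∃ j, k = j + 1 := ⟨k - 1, by omega⟩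
  exact alt_pow_succ_le_alt_iterComp hne j
end
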